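/- For an odd prime power q, the number of conjugacy classes of SL(2, F_q) is q + 4. -/

import Mathlib

/-!
Every non-central `A ∈ SL(2, F)` has a conjugate with nonzero lower-left entry `ε`, and is then
conjugate to `companion (tr A) ε = !![0, -ε; ε⁻¹, tr A]`. Comparing entries shows that
`companion t ε` and `companion t ε'` are conjugate in `SL(2, F)` iff `ε / ε'` is a value of the
binary form `x² + t x y + y²`. For `t² ≠ 4` this form is nondegenerate, hence universal over a
finite field of odd order, so the trace determines the class. For `t = ±2` it is the square
`(x ± y)²`, so the class of `companion t ε` is determined by the square class of `ε`. Together with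
the two central classes `±1` this gives `2 + (q - 2) + 2 · 2 = q + 4` classes.
-/

open Matrix Subgroup
open scoped MatrixGroups

namespace FiniteField

variable {F : Type*} [Field F] [Fintype F]

theorem exists_sq_add_mul_add_sq_eq (hF : ringChar F ≠ 2) {t : F} (ht : t ^ 2 ≠ 4) (e : F) :
    ∃ x y : F, x ^ 2 + t * x * y + y ^ 2 = e := by
  open Polynomial in
  obtain ⟨u, w, huw⟩ := exists_root_sum_quadratic (f := X ^ 2)
    (g := C (4 - t ^ 2) * X ^ 2 + C 0 * X + C (-(4 * e))) (degree_X_pow 2)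
    (degree_quadratic (sub_ne_zero.2 (Ne.symm ht))) (odd_card_of_char_ne_two hF)
  simp only [Polynomial.eval_add, Polynomial.eval_mul, Polynomial.eval_pow, Polynomial.eval_X,
    Polynomial.eval_C] at huw
  have h2 : (2 : F) ≠ 0 := Ring.two_ne_zero hF
  -- `4 (x² + t x y + y²) = (2 x + t y)² + (4 - t²) y²`
  refine ⟨(u - t * w) / 2, w, ?_⟩
  field_simp
  linear_combination huw

theorem isSquare_or_isSquare_mul {ν : F} (hν : ¬IsSquare ν) (a : F) :
    IsSquare a ∨ IsSquare (a * ν) := by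
  classical
  by_cases ha : IsSquare a
  · exact .inl ha
  have ha0 : a ≠ 0 := by rintro rfl; exact ha ⟨0, by simp⟩
  have hν0 : ν ≠ 0 := by rintro rfl; exact hν ⟨0, by simp⟩
  rw [← quadraticChar_one_iff_isSquare (mul_ne_zero ha0 hν0), map_mul,
    quadraticChar_neg_one_iff_not_isSquare.2 ha, quadraticChar_neg_one_iff_not_isSquare.2 hν]
  exact .inr (by norm_num)

end FiniteField

theorem card_sq_eq_four {F : Type*} [Field F] (hF : ringChar F ≠ 2) :
    Nat.card {t : F // t ^ 2 = 4} = 2 := by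
  have h2 : (2 : F) ≠ -2 := fun h ↦
    Ring.two_ne_zero hF (mul_self_eq_zero.1 (by linear_combination h))
  calc Nat.card {t : F // t ^ 2 = 4} = Nat.card ({2, -2} : Set F) :=
        Nat.card_congr <| Equiv.subtypeEquivRight fun t ↦ by
          rw [show (4 : F) = 2 ^ 2 by norm_num, sq_eq_sq_iff_eq_or_eq_neg]; rfl
    _ = 2 := by rw [Nat.card_coe_set_eq, Set.ncard_pair h2]

namespace Matrix.SpecialLinearGroup

section CommRing

variable {n R : Type*} [Fintype n] [DecidableEq n] [CommRing R]

theorem trace_eq_of_isConj {A B : SpecialLinearGroup n R} (h : IsConj A B) :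
    trace (A : Matrix n n R) = trace (B : Matrix n n R) := by
  obtain ⟨g, rfl⟩ := isConj_iff.1 h
  rw [coe_mul, coe_mul, trace_mul_cycle, ← coe_mul, inv_mul_cancel, coe_one, one_mul]

theorem isConj_iff_exists_coe_mul_eq {A B : SpecialLinearGroup n R} :
    IsConj A B ↔ ∃ g : SpecialLinearGroup n R, (g : Matrix n n R) * A = B * g := by
  simp only [isConj_iff, mul_inv_eq_iff_eq_mul, ← coe_mul]
  exact exists_congr fun g ↦ Subtype.val_inj.symm

theorem conj_apply_one_zero (g A : SL(2, R)) :
    (g * A * g⁻¹ : SL(2, R)) 1 0 =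
      g 1 0 * g 1 1 * (A 0 0 - A 1 1) - g 1 0 ^ 2 * A 0 1 + g 1 1 ^ 2 * A 1 0 := by
  rw [coe_mul, coe_mul, coe_inv]
  simp only [adjugate_fin_two, mul_apply, Fin.sum_univ_two, of_apply, cons_val', cons_val_zero,
    cons_val_one, cons_val_fin_one]
  ring

theorem exists_conj_apply_one_zero_ne_zero {A : SL(2, R)} (hA : A ∉ center SL(2, R)) :
    ∃ g : SL(2, R), (g * A * g⁻¹ : SL(2, R)) 1 0 ≠ 0 := by
  by_contra! h
  have key g := (conj_apply_one_zero g A).symm.trans (h g)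
  have hc : A 1 0 = 0 := by simpa using key 1
  have hb : A 0 1 = 0 := by simpa using key ⟨!![0, -1; 1, 0], by simp [det_fin_two_of]⟩
  have had : A 1 1 = A 0 0 := by
    refine (sub_eq_zero.1 ?_).symm
    simpa [hb, hc, eq_comm] using key ⟨!![1, 0; 1, 1], by simp [det_fin_two_of]⟩
  have hdet : A 0 0 * A 1 1 - A 0 1 * A 1 0 = 1 := by rw [← det_fin_two]; exact A.2
  refine hA (mem_center_iff.2 ⟨A 0 0, ?_, ?_⟩)
  · rw [Fintype.card_fin, sq]
    simpa [hb, had] using hdet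
  · conv_rhs => rw [eta_fin_two (A : Matrix (Fin 2) (Fin 2) R), hb, hc, had]
    rw [scalar_apply, diagonal_fin_two]

end CommRing

section Field

variable {F : Type*} [Field F]

/-- `companion t 1` is the companion matrix of `X² - t X + 1`, and `companion t ε` is its conjugate
by `diag(ε, 1)` in `GL(2, F)`. -/
def companion (t : F) (ε : Fˣ) : SL(2, F) :=
  ⟨!![0, -ε; (ε : F)⁻¹, t], by simp [det_fin_two_of]⟩

@[simp]
theorem trace_companion (t : F) (ε : Fˣ) :
    trace (companion t ε : Matrix (Fin 2) (Fin 2) F) = t := by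
  simp [companion, trace_fin_two_of]

theorem companion_notMem_center (t : F) (ε : Fˣ) : companion t ε ∉ center SL(2, F) := by
  intro h
  obtain ⟨r, -, hr⟩ := mem_center_iff.1 h
  simpa [companion] using congr_fun₂ hr 0 1

theorem isConj_companion_of_apply_one_zero (A : SL(2, F)) (ε : Fˣ) (h : A 1 0 = ε) :
    IsConj (companion (trace (A : Matrix (Fin 2) (Fin 2) F)) ε) A := by
  induction A using fin_two_induction with | h a b c d hdet => ?_
  obtain rfl : c = ε := h
  refine isConj_iff_exists_coe_mul_eq.2 ⟨⟨!![(ε : F)⁻¹, a; 0, ε], by simp [det_fin_two_of]⟩, ?_⟩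
  simp only [companion, coe_mk, mul_fin_two, trace_fin_two_of, EmbeddingLike.apply_eq_iff_eq,
    vecCons_inj, and_true]
  refine ⟨⟨by ring, ?_⟩, by ring, by ring⟩
  field_simp
  linear_combination hdet

theorem isConj_companion_iff {t : F} {ε ε' : Fˣ} :
    IsConj (companion t ε) (companion t ε') ↔
      ∃ x y : F, ε' * (x ^ 2 + t * x * y + y ^ 2) = ε := by
  rw [isConj_iff_exists_coe_mul_eq]
  constructor
  · rintro ⟨g, hg⟩
    induction g using fin_two_induction with | h p q r s hdet => ?_
    simp only [companion, coe_mk, mul_fin_two, EmbeddingLike.apply_eq_iff_eq, vecCons_inj,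
      and_true] at hg
    obtain ⟨⟨e00, -⟩, e10, -⟩ := hg
    field_simp at e00 e10
    refine ⟨s, -ε * r, ?_⟩
    linear_combination s * e10 + ε * hdet + ε * r * e00
  · rintro ⟨x, y, h⟩
    refine ⟨⟨!![ε' / ε * (x + t * y), ε' * y; -y / ε, x], ?_⟩, ?_⟩
    · rw [det_fin_two_of]
      field_simp
      linear_combination h
    · simp only [companion, coe_mk, mul_fin_two, EmbeddingLike.apply_eq_iff_eq, vecCons_inj,
        and_true]
      refine ⟨⟨?_, ?_⟩, ?_, ?_⟩ <;> field_simp <;> ring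

theorem isConj_companion_of_isSquare_mul {t : F} {ε ε' : Fˣ} (h : IsSquare ((ε : F) * ε')) :
    IsConj (companion t ε) (companion t ε') := by
  obtain ⟨r, hr⟩ := h
  refine isConj_companion_iff.2 ⟨r / ε', 0, ?_⟩
  field_simp
  linear_combination -hr

theorem isSquare_of_isConj_companion_one {t : F} (ht : t ^ 2 = 4) {ε : Fˣ}
    (h : IsConj (companion t 1) (companion t ε)) : IsSquare (ε : F) := by
  obtain ⟨x, y, hxy⟩ := isConj_companion_iff.1 h
  obtain ⟨z, hz⟩ : ∃ z, x ^ 2 + t * x * y + y ^ 2 = z ^ 2 := by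
    rcases sq_eq_sq_iff_eq_or_eq_neg.1 (ht.trans (by norm_num) : t ^ 2 = 2 ^ 2) with rfl | rfl
    exacts [⟨x + y, by ring⟩, ⟨x - y, by ring⟩]
  rw [hz, Units.val_one] at hxy
  exact ⟨z⁻¹, by rw [eq_inv_of_mul_eq_one_left hxy, sq, mul_inv]⟩

theorem isConj_companion_one_of_sq_ne_four [Fintype F] (hF : ringChar F ≠ 2) {t : F}
    (ht : t ^ 2 ≠ 4) (ε : Fˣ) : IsConj (companion t ε) (companion t 1) := by
  obtain ⟨x, y, h⟩ := FiniteField.exists_sq_add_mul_add_sq_eq hF ht ε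
  exact isConj_companion_iff.2 ⟨x, y, by rw [Units.val_one, one_mul, h]⟩

theorem card_center_fin_two (hF : ringChar F ≠ 2) : Nat.card (center SL(2, F)) = 2 := by
  rw [Nat.card_congr center_equiv_rootsOfUnity.toEquiv]
  simpa using (IsPrimitiveRoot.neg_one (ringChar F) hF).card_rootsOfUnity

def classRep (ν : Fˣ) : center SL(2, F) ⊕ F ⊕ {t : F // t ^ 2 = 4} → SL(2, F)
  | .inl z => z
  | .inr (.inl t) => companion t 1
  | .inr (.inr t) => companion t ν

theorem eq_of_isConj_classRep {ν : Fˣ} (hν : ¬IsSquare (ν : F)) {i j}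
    (h : IsConj (classRep ν i) (classRep ν j)) : i = j := by
  have htr := trace_eq_of_isConj h
  rcases i with z | t | ⟨t, ht⟩ <;> rcases j with z' | t' | ⟨t', ht'⟩ <;>
    simp only [classRep, trace_companion] at h htr
  · exact congrArg Sum.inl (Subtype.ext (h.eq_of_left_mem_center z.2))
  · exact (companion_notMem_center t' 1 (h.eq_of_left_mem_center z.2 ▸ z.2)).elim
  · exact (companion_notMem_center t' ν (h.eq_of_left_mem_center z.2 ▸ z.2)).elim
  · exact (companion_notMem_center t 1 ((h.eq_of_right_mem_center z'.2).symm ▸ z'.2)).elim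
  · rw [htr]
  · subst htr
    exact (hν (isSquare_of_isConj_companion_one ht' h)).elim
  · exact (companion_notMem_center t ν ((h.eq_of_right_mem_center z'.2).symm ▸ z'.2)).elim
  · subst htr
    exact (hν (isSquare_of_isConj_companion_one ht h.symm)).elim
  · subst htr
    rfl

theorem exists_isConj_classRep [Fintype F] (hF : ringChar F ≠ 2) {ν : Fˣ}
    (hν : ¬IsSquare (ν : F)) (A : SL(2, F)) : ∃ i, IsConj (classRep ν i) A := by
  by_cases hA : A ∈ center SL(2, F)
  · exact ⟨.inl ⟨A, hA⟩, IsConj.refl A⟩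
  obtain ⟨g, hg⟩ := exists_conj_apply_one_zero_ne_zero hA
  set t := trace (↑(g * A * g⁻¹) : Matrix (Fin 2) (Fin 2) F)
  set ε : Fˣ := .mk0 _ hg
  have hA' : IsConj (companion t ε) A :=
    (isConj_companion_of_apply_one_zero _ ε rfl).trans (isConj_iff.2 ⟨g⁻¹, by group⟩)
  by_cases ht : t ^ 2 = 4
  · rcases FiniteField.isSquare_or_isSquare_mul hν ε with hε | hε
    · exact ⟨.inr (.inl t), (isConj_companion_of_isSquare_mul (by simpa using hε)).symm.trans hA'⟩
    · exact ⟨.inr (.inr ⟨t, ht⟩), (isConj_companion_of_isSquare_mul hε).symm.trans hA'⟩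
  · exact ⟨.inr (.inl t), (isConj_companion_one_of_sq_ne_four hF ht ε).symm.trans hA'⟩

theorem conjClassesMk_comp_classRep_bijective [Fintype F] (hF : ringChar F ≠ 2) {ν : Fˣ}
    (hν : ¬IsSquare (ν : F)) : Function.Bijective (ConjClasses.mk ∘ classRep ν) := by
  refine ⟨fun i j h ↦ eq_of_isConj_classRep hν (ConjClasses.mk_eq_mk_iff_isConj.1 h), fun C ↦ ?_⟩
  obtain ⟨A, rfl⟩ := ConjClasses.mk_surjective C
  obtain ⟨i, hi⟩ := exists_isConj_classRep hF hν A
  exact ⟨i, ConjClasses.mk_eq_mk_iff_isConj.2 hi⟩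

end Field

end Matrix.SpecialLinearGroup

open Matrix.SpecialLinearGroup in
theorem conjClasses_SL2 (F : Type*) [Field F] [Fintype F]
    (hodd : Odd (Fintype.card F)) :
    Nat.card (ConjClasses (Matrix.SpecialLinearGroup (Fin 2) F)) =
      Fintype.card F + 4 := by
  have hF : ringChar F ≠ 2 := fun h ↦ by
    rw [FiniteField.even_card_iff_char_two, ← Nat.even_iff] at h
    exact Nat.not_even_iff_odd.2 hodd h
  obtain ⟨ν, hν⟩ := FiniteField.exists_nonsquare hF
  have hν0 : ν ≠ 0 := by rintro rfl; exact hν ⟨0, by simp⟩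
  rw [← Nat.card_congr (Equiv.ofBijective _
      (conjClassesMk_comp_classRep_bijective hF (ν := .mk0 ν hν0) hν)),
    Nat.card_sum, Nat.card_sum, card_center_fin_two hF, card_sq_eq_four hF,
    Nat.card_eq_fintype_card]
  ring
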